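/- Let c ∈ ℝ, let n ≥ 1 be an integer, and let f : [0,π] → ℝ be continuously differentiable. Then ∫₀^π (−f'(x) + c f(x)) · √(2/π) sin(nx) dx = √(n² + c²) · ∫₀^π f(x) ψ_n(x) dx, where ψ_n(x) := (n² + c²)^{−1/2} √(2/π) (n cos(nx) + c sin(nx)). -/

import Mathlib

/-!
Integrate by parts against `φ = √(2/π) sin(n·)`: the boundary term vanishes because
`φ(0) = φ(π) = 0`, so `∫ (-f' + c f) φ = ∫ f (φ' + c φ)`, and `φ' + c φ = √(n² + c²) ψ_n`.
-/

noncomputable section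

open MeasureTheory Set

/-- The Robin eigenfunctions `ψ_n = (n²+c²)^{-1/2} A φ_n^D` on `[0,π]`. -/
def robinEigen (c : ℝ) (n : ℕ) (x : ℝ) : ℝ :=
  (Real.sqrt ((n : ℝ) ^ 2 + c ^ 2))⁻¹ * Real.sqrt (2 / Real.pi) *
    ((n : ℝ) * Real.cos ((n : ℝ) * x) + c * Real.sin ((n : ℝ) * x))

section IntegrationByParts

variable {a b : ℝ} {f φ φ' : ℝ → ℝ}

theorem ContDiffOn.intervalIntegrable_deriv (hab : a < b) (hf : ContDiffOn ℝ 1 f (Icc a b)) :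
    IntervalIntegrable (deriv f) volume a b := by
  have hcont : ContinuousOn (derivWithin f (Icc a b)) (uIcc a b) := by
    rw [uIcc_of_le hab.le]
    exact hf.continuousOn_derivWithin (uniqueDiffOn_Icc hab) le_rfl
  refine hcont.intervalIntegrable.congr_uIoo fun x hx ↦ ?_
  rw [uIoo_of_le hab.le] at hx
  exact derivWithin_of_mem_nhds (Icc_mem_nhds hx.1 hx.2)

theorem integral_deriv_mul_eq_neg_integral_mul_deriv (hab : a < b)
    (hf : ContDiffOn ℝ 1 f (Icc a b)) (hφ : ∀ x ∈ Icc a b, HasDerivAt φ (φ' x) x)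
    (hφ' : ContinuousOn φ' (Icc a b)) (ha : φ a = 0) (hb : φ b = 0) :
    ∫ x in a..b, deriv f x * φ x = -∫ x in a..b, f x * φ' x := by
  have hf' : ∀ x ∈ Ioo a b, HasDerivAt f (deriv f x) x := fun x hx ↦
    ((hf.differentiableOn one_ne_zero).differentiableAt (Icc_mem_nhds hx.1 hx.2)).hasDerivAt
  have hparts := intervalIntegral.integral_mul_deriv_eq_deriv_mul_of_hasDerivAt
    (hf.continuousOn.mono (uIcc_of_le hab.le).subset)
    (fun x hx ↦ (hφ x ((uIcc_of_le hab.le) ▸ hx)).continuousAt.continuousWithinAt)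
    (by simpa [hab.le] using hf')
    (by simpa [hab.le] using fun x hx ↦ hφ x (Ioo_subset_Icc_self hx))
    (hf.intervalIntegrable_deriv hab) (hφ'.intervalIntegrable_of_Icc hab.le)
  rw [ha, hb] at hparts
  linarith

theorem integral_neg_deriv_add_const_mul_mul_eq (c : ℝ) (hab : a < b)
    (hf : ContDiffOn ℝ 1 f (Icc a b)) (hφ : ∀ x ∈ Icc a b, HasDerivAt φ (φ' x) x)
    (hφ' : ContinuousOn φ' (Icc a b)) (ha : φ a = 0) (hb : φ b = 0) :
    ∫ x in a..b, (-(deriv f x) + c * f x) * φ x = ∫ x in a..b, f x * (φ' x + c * φ x) := by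
  have hφc : ContinuousOn φ (Icc a b) := fun x hx ↦ (hφ x hx).continuousAt.continuousWithinAt
  have hf'φ : IntervalIntegrable (fun x ↦ deriv f x * φ x) volume a b :=
    (hf.intervalIntegrable_deriv hab).mul_continuousOn (by rwa [uIcc_of_le hab.le])
  have hfφ : IntervalIntegrable (fun x ↦ f x * φ x) volume a b :=
    (hf.continuousOn.mul hφc).intervalIntegrable_of_Icc hab.le
  have hfφ' : IntervalIntegrable (fun x ↦ f x * φ' x) volume a b :=
    (hf.continuousOn.mul hφ').intervalIntegrable_of_Icc hab.le
  calc ∫ x in a..b, (-(deriv f x) + c * f x) * φ x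
      = -(∫ x in a..b, deriv f x * φ x) + c * ∫ x in a..b, f x * φ x := by
        simp only [add_mul, neg_mul, mul_assoc]
        rw [intervalIntegral.integral_add (f := fun x ↦ -(deriv f x * φ x)) hf'φ.neg
          (hfφ.const_mul c), intervalIntegral.integral_neg, intervalIntegral.integral_const_mul]
    _ = (∫ x in a..b, f x * φ' x) + c * ∫ x in a..b, f x * φ x := by
        rw [integral_deriv_mul_eq_neg_integral_mul_deriv hab hf hφ hφ' ha hb, neg_neg]
    _ = ∫ x in a..b, f x * (φ' x + c * φ x) := by
        simp only [mul_add, mul_left_comm (f _) c]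
        rw [intervalIntegral.integral_add hfφ' (hfφ.const_mul c),
          intervalIntegral.integral_const_mul]

end IntegrationByParts

theorem hasDerivAt_const_mul_sin_mul (A k x : ℝ) :
    HasDerivAt (fun x ↦ A * Real.sin (k * x)) (A * (k * Real.cos (k * x))) x := by
  have h := ((Real.hasDerivAt_sin _).comp x ((hasDerivAt_id x).const_mul k)).const_mul A
  simpa [mul_comm, mul_left_comm, mul_assoc] using h

theorem sqrt_mul_robinEigen (c : ℝ) (n : ℕ) (x : ℝ) :
    Real.sqrt ((n : ℝ) ^ 2 + c ^ 2) * robinEigen c n x =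
      Real.sqrt (2 / Real.pi) * (n * Real.cos (n * x)) +
        c * (Real.sqrt (2 / Real.pi) * Real.sin (n * x)) := by
  by_cases h0 : Real.sqrt ((n : ℝ) ^ 2 + c ^ 2) = 0
  · -- `n² + c² = 0` forces `n = c = 0`, where both sides vanish
    have hsum : (n : ℝ) ^ 2 + c ^ 2 = 0 := (Real.sqrt_eq_zero (by positivity)).mp h0
    have hn : (n : ℝ) = 0 := by nlinarith [sq_nonneg (n : ℝ), sq_nonneg c]
    have hc : c = 0 := by nlinarith [sq_nonneg (n : ℝ), sq_nonneg c]
    simp [hn, hc]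
  · rw [robinEigen, ← mul_assoc, ← mul_assoc, mul_inv_cancel₀ h0, one_mul]
    ring

theorem intertwining_dirichlet_robin_general (c : ℝ) (n : ℕ) (f : ℝ → ℝ)
    (hf : ContDiffOn ℝ 1 f (Set.Icc 0 Real.pi)) :
    ∫ x in (0 : ℝ)..Real.pi,
        (-(deriv f x) + c * f x) * (Real.sqrt (2 / Real.pi) * Real.sin ((n : ℝ) * x)) =
      Real.sqrt ((n : ℝ) ^ 2 + c ^ 2) *
        ∫ x in (0 : ℝ)..Real.pi, f x * robinEigen c n x := by
  calc _ = ∫ x in (0 : ℝ)..Real.pi, f x * (Real.sqrt (2 / Real.pi) * (n * Real.cos (n * x)) +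
          c * (Real.sqrt (2 / Real.pi) * Real.sin (n * x))) :=
        integral_neg_deriv_add_const_mul_mul_eq c Real.pi_pos hf
          (fun x _ ↦ hasDerivAt_const_mul_sin_mul _ _ x) (by fun_prop) (by simp)
          (by simp [Real.sin_nat_mul_pi])
    _ = ∫ x in (0 : ℝ)..Real.pi, Real.sqrt ((n : ℝ) ^ 2 + c ^ 2) * (f x * robinEigen c n x) :=
        intervalIntegral.integral_congr fun x _ ↦ by
          rw [mul_left_comm _ (f x), sqrt_mul_robinEigen]
    _ = _ := intervalIntegral.integral_const_mul _ _

theorem intertwining_dirichlet_robin (c : ℝ) (n : ℕ) (hn : 1 ≤ n) (f : ℝ → ℝ)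
    (hf : ContDiffOn ℝ 1 f (Set.Icc 0 Real.pi)) :
    ∫ x in (0 : ℝ)..Real.pi,
        (-(deriv f x) + c * f x) * (Real.sqrt (2 / Real.pi) * Real.sin ((n : ℝ) * x)) =
      Real.sqrt ((n : ℝ) ^ 2 + c ^ 2) *
        ∫ x in (0 : ℝ)..Real.pi, f x * robinEigen c n x :=
  intertwining_dirichlet_robin_general c n f hf
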